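/- arXiv:math/0609401 — 4 statements merged into one kernel-verified Lean document; each statement's English description precedes it below -/
import Mathlib

section
/- There exists an increasing sequence (B_n) of Borel subsets of the real line whose union is all of ℝ, such that for no n can ℝ be covered by countably many translates of B_n. -/
/-!
Let `g_k(x)` be the fractional part of `2^(k³) x`, and let `B_n` consist of the `x` such that
either no `g_k(x)` lies in `(0, 2⁻ⁿ)`, or the positive values of the `g_k(x)` accumulate at `0`;
every `x` lies in some `B_n`. Given translations `t₀, t₁, …`, a point `y` with every `y - tᵢ ∉ B_n`
is built by nested intervals: at stage `m`, at frequency `2^(k³)` with `k = n + m + 1`, the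
interval is shrunk so that `g_k(y - tₘ) ∈ [2⁻ⁿ⁻², 2⁻ⁿ⁻¹]`, and then, for each `i < m` in turn,
so that `g_k(y - tᵢ)` avoids `(0, εᵢ)` for a tolerance `εᵢ` depending only on `i`. Each exclusion
costs a fixed factor of the length, and the frequencies grow fast enough that one period of the
next frequency still fits into what is left.
-/

open Set Filter Topology

section NestedIntervals

variable (L : ℕ → ℝ) (P : ℕ → ℝ → Prop)

theorem exists_Icc_forall_lt_of_step
    (h : ∀ i c, ∃ c', Icc c' (c' + L (i + 1)) ⊆ Icc c (c + L i) ∧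
      ∀ y ∈ Icc c' (c' + L (i + 1)), P i y)
    (j : ℕ) (c : ℝ) :
    ∃ c', Icc c' (c' + L j) ⊆ Icc c (c + L 0) ∧ ∀ i < j, ∀ y ∈ Icc c' (c' + L j), P i y := by
  induction j with
  | zero => exact ⟨c, subset_rfl, fun i hi => absurd hi i.not_lt_zero⟩
  | succ j ih =>
    obtain ⟨c₁, hc₁, hP₁⟩ := ih
    obtain ⟨c₂, hc₂, hP₂⟩ := h j c₁
    refine ⟨c₂, hc₂.trans hc₁, fun i hi y hy => ?_⟩
    rcases Nat.lt_succ_iff_lt_or_eq.1 hi with hi | rfl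
    · exact hP₁ i hi y (hc₂ hy)
    · exact hP₂ y hy

theorem exists_forall_of_step (hL : ∀ i, 0 ≤ L i)
    (h : ∀ i c, ∃ c', Icc c' (c' + L (i + 1)) ⊆ Icc c (c + L i) ∧
      ∀ y ∈ Icc c' (c' + L (i + 1)), P i y)
    (c : ℝ) : ∃ y, ∀ i, P i y := by
  choose next hnext_sub hnext using h
  let a : ℕ → ℝ := fun i => Nat.rec c (fun i ai => next i ai) i
  have hy := ciSup_mem_iInter_Icc_of_antitone_Icc (f := a) (g := fun i => a i + L i)
    (antitone_nat_of_succ_le fun i => hnext_sub i (a i)) fun i => le_add_of_nonneg_right (hL i)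
  exact ⟨⨆ i, a i, fun i => hnext i (a i) _ (mem_iInter.1 hy (i + 1))⟩

end NestedIntervals

theorem exists_Icc_subset_disjoint_Ioo {L e : ℝ} (hL : 0 ≤ L) (he : e ≤ L / 2) (c u : ℝ) :
    ∃ c', Icc c' (c' + L / 4) ⊆ Icc c (c + L) ∧ Disjoint (Icc c' (c' + L / 4)) (Ioo u (u + e)) := by
  by_cases hu : c + L / 4 ≤ u
  · refine ⟨c, Icc_subset_Icc le_rfl (by linarith), disjoint_left.2 fun z hz hz' => ?_⟩
    linarith [hz.2, hz'.1]
  · refine ⟨max c (u + e), Icc_subset_Icc (le_max_left _ _) ?_,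
      disjoint_left.2 fun z hz hz' => ?_⟩
    · rcases max_cases c (u + e) with ⟨h, _⟩ | ⟨h, _⟩ <;> linarith
    · linarith [hz.1, le_max_right c (u + e), hz'.2]

theorem mem_Ioo_union_of_fract_sub_mem_Ioo {c s z ε : ℝ} (hz : z ∈ Icc c (c + 1))
    (h : Int.fract (z - s) ∈ Ioo 0 ε) :
    z ∈ Ioo (s + ⌊c - s⌋) (s + ⌊c - s⌋ + ε) ∪ Ioo (s + ⌊c - s⌋ + 1) (s + ⌊c - s⌋ + 1 + ε) := by
  have h₁ : ⌊c - s⌋ ≤ ⌊z - s⌋ := Int.floor_mono (by linarith [hz.1])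
  have h₂ : ⌊z - s⌋ ≤ ⌊c - s⌋ + 1 := by
    rw [← Int.floor_add_one]; exact Int.floor_mono (by linarith [hz.2])
  rw [← Int.self_sub_floor] at h
  obtain ⟨h₀, hε⟩ := h
  rcases (by omega : ⌊z - s⌋ = ⌊c - s⌋ ∨ ⌊z - s⌋ = ⌊c - s⌋ + 1) with hf | hf <;>
    rw [hf] at h₀ hε
  · left; constructor <;> linarith
  · right; push_cast at h₀ hε; constructor <;> linarith

theorem exists_Icc_subset_forall_fract_sub_notMem_Ioo {ℓ ε : ℝ} (hℓ : 0 ≤ ℓ) (hℓ₁ : ℓ ≤ 1)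
    (hε : ε ≤ ℓ / 8) (s c : ℝ) :
    ∃ c', Icc c' (c' + ℓ / 16) ⊆ Icc c (c + ℓ) ∧
      ∀ z ∈ Icc c' (c' + ℓ / 16), Int.fract (z - s) ∉ Ioo 0 ε := by
  obtain ⟨c₁, hc₁, hdisj₁⟩ :=
    exists_Icc_subset_disjoint_Ioo (e := ε) hℓ (by linarith) c (s + ⌊c - s⌋)
  obtain ⟨c₂, hc₂, hdisj₂⟩ :=
    exists_Icc_subset_disjoint_Ioo (L := ℓ / 4) (e := ε) (by positivity) (by linarith) c₁
      (s + ⌊c - s⌋ + 1)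
  rw [div_div, show (4 : ℝ) * 4 = 16 by norm_num] at hc₂ hdisj₂
  refine ⟨c₂, hc₂.trans hc₁, fun z hz hfract => ?_⟩
  have hz₁ : z ∈ Icc c (c + 1) := Icc_subset_Icc_right (by linarith) (hc₁ (hc₂ hz))
  rcases mem_Ioo_union_of_fract_sub_mem_Ioo hz₁ hfract with h | h
  · exact disjoint_left.1 hdisj₁ (hc₂ hz) h
  · exact disjoint_left.1 hdisj₂ hz h

theorem exists_Icc_subset_forall_fract_sub_mem_Icc {α w : ℝ} (hα : 0 ≤ α) (hw : α + w < 1)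
    (t a : ℝ) :
    ∃ c, Icc c (c + w) ⊆ Icc a (a + 2) ∧
      ∀ z ∈ Icc c (c + w), Int.fract (z - t) ∈ Icc α (α + w) := by
  have hm₁ : a - t ≤ ⌈a - t⌉ := Int.le_ceil _
  have hm₂ : (⌈a - t⌉ : ℝ) < a - t + 1 := Int.ceil_lt_add_one _
  refine ⟨t + ⌈a - t⌉ + α, Icc_subset_Icc (by linarith) (by linarith), fun z hz => ?_⟩
  rw [← Int.fract_sub_intCast (z - t) ⌈a - t⌉,
    Int.fract_eq_self.2 ⟨by linarith [hz.1], by linarith [hz.2]⟩]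
  constructor <;> linarith [hz.1, hz.2]

theorem exists_Icc_stage {α : ℝ} (hα : 0 < α) (hα₁ : α + α < 1) (m : ℕ) (t : ℝ) (s : ℕ → ℝ)
    (a : ℝ) :
    ∃ c, Icc c (c + α / 16 ^ m) ⊆ Icc a (a + 2) ∧ ∀ z ∈ Icc c (c + α / 16 ^ m),
      Int.fract (z - t) ∈ Icc α (α + α) ∧
        ∀ i < m, Int.fract (z - s i) ∉ Ioo 0 (α / 16 ^ i / 8) := by
  obtain ⟨c₀, hc₀, hhit⟩ := exists_Icc_subset_forall_fract_sub_mem_Icc hα.le hα₁ t a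
  have hstep (i : ℕ) (c : ℝ) := exists_Icc_subset_forall_fract_sub_notMem_Ioo
    (ℓ := α / 16 ^ i) (by positivity)
    ((div_le_self hα.le (one_le_pow₀ (by norm_num))).trans (by linarith)) le_rfl (s i) c
  obtain ⟨c, hc, havoid⟩ := exists_Icc_forall_lt_of_step (fun i => α / 16 ^ i)
    (fun i z => Int.fract (z - s i) ∉ Ioo 0 (α / 16 ^ i / 8))
    (fun i c => by simpa only [pow_succ, ← div_div] using hstep i c) m c₀
  simp only [pow_zero, div_one] at hc
  exact ⟨c, hc.trans hc₀, fun z hz => ⟨hhit z (hc hz), fun i hi => havoid i hi z hz⟩⟩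

theorem exists_Icc_stage_scaled {E E' α : ℝ} (hE : 0 < E) (hα : 0 < α) (hα₁ : α + α < 1) (m : ℕ)
    (hEE' : 2 / E' ≤ α / 16 ^ m / E) (t : ℝ) (s : ℕ → ℝ) (a : ℝ) :
    ∃ a', Icc a' (a' + 2 / E') ⊆ Icc a (a + 2 / E) ∧ ∀ y ∈ Icc a' (a' + 2 / E'),
      Int.fract (E * (y - t)) ∈ Icc α (α + α) ∧
        ∀ i < m, Int.fract (E * (y - s i)) ∉ Ioo 0 (α / 16 ^ i / 8) := by
  obtain ⟨c, hc, hstage⟩ := exists_Icc_stage hα hα₁ m (E * t) (fun i => E * s i) (E * a)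
  have hscale : Icc (c / E) (c / E + 2 / E') ⊆ (E * ·) ⁻¹' Icc c (c + α / 16 ^ m) := by
    rw [preimage_const_mul_Icc₀ _ _ hE, add_div]
    exact Icc_subset_Icc_right (by linarith)
  have hback : (E * ·) ⁻¹' Icc (E * a) (E * a + 2) = Icc a (a + 2 / E) := by
    rw [preimage_const_mul_Icc₀ _ _ hE, add_div, mul_div_cancel_left₀ _ hE.ne']
  refine ⟨c / E, fun y hy => hback ▸ hc (hscale hy), fun y hy => ?_⟩
  simpa only [mul_sub] using hstage (E * y) (hscale hy)

noncomputable def lacunaryFract (k : ℕ) (x : ℝ) : ℝ := Int.fract (2 ^ k ^ 3 * x)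

def coverSeq (n : ℕ) : Set ℝ :=
  {x | ∀ k, lacunaryFract k x ∉ Ioo 0 ((1 / 2) ^ n)} ∪
    {x | ∀ m : ℕ, ∃ k, lacunaryFract k x ∈ Ioo 0 ((1 / 2) ^ m)}

theorem measurable_lacunaryFract (k : ℕ) : Measurable (lacunaryFract k) :=
  (measurable_const.mul measurable_id).fract

theorem measurableSet_coverSeq (n : ℕ) : MeasurableSet (coverSeq n) := by
  have h (k : ℕ) (δ : ℝ) : MeasurableSet {x | lacunaryFract k x ∈ Ioo 0 δ} :=
    measurable_lacunaryFract k measurableSet_Ioo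
  simp only [coverSeq, ofPred_forall, ofPred_exists]
  exact (MeasurableSet.iInter fun k => (h k _).compl).union
    (MeasurableSet.iInter fun m => MeasurableSet.iUnion fun k => h k _)

theorem monotone_coverSeq : Monotone coverSeq := by
  rintro n n' hn x (hx | hx)
  · exact Or.inl fun k hk =>
      hx k ⟨hk.1, hk.2.trans_le (pow_le_pow_of_le_one (by norm_num) (by norm_num) hn)⟩
  · exact Or.inr hx

theorem iUnion_coverSeq : ⋃ n, coverSeq n = univ := by
  refine eq_univ_of_forall fun x => mem_iUnion.2 ?_
  by_cases h : ∀ m : ℕ, ∃ k, lacunaryFract k x ∈ Ioo 0 ((1 / 2) ^ m)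
  · exact ⟨0, Or.inr h⟩
  · push Not at h
    obtain ⟨m, hm⟩ := h
    exact ⟨m, Or.inl hm⟩

theorem notMem_coverSeq {n k₀ K : ℕ} {δ x : ℝ} (hhit : lacunaryFract k₀ x ∈ Ioo 0 ((1 / 2) ^ n))
    (hδ : 0 < δ) (hfar : ∀ k ≥ K, lacunaryFract k x ∉ Ioo 0 δ) : x ∉ coverSeq n := by
  rintro (hx | hx)
  · exact hx k₀ hhit
  have h₀ : Tendsto (fun m : ℕ => (1 / 2 : ℝ) ^ m) atTop (𝓝 0) :=
    tendsto_pow_atTop_nhds_zero_of_lt_one (by norm_num) (by norm_num)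
  have hnear (k : ℕ) : ∀ᶠ m in atTop, lacunaryFract k x ∉ Ioo 0 ((1 / 2) ^ m) := by
    rcases le_or_gt (lacunaryFract k x) 0 with hk | hk
    · exact Eventually.of_forall fun m hm => hk.not_gt hm.1
    · exact (h₀.eventually (eventually_lt_nhds hk)).mono fun m hm hm' => lt_asymm hm hm'.2
  obtain ⟨m, hmδ, hmK⟩ := ((h₀.eventually (eventually_le_nhds hδ)).and
    ((eventually_all_finset (Finset.range K)).2 fun k _ => hnear k)).exists
  obtain ⟨k, hk⟩ := hx m
  by_cases hkK : k < K
  · exact hmK k (Finset.mem_range.2 hkK) hk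
  · exact hfar k (not_lt.1 hkK) ⟨hk.1, hk.2.trans_le hmδ⟩

theorem two_div_two_pow_succ_cube_le (n m : ℕ) :
    2 / 2 ^ (n + (m + 1) + 1) ^ 3 ≤ (1 / 2 : ℝ) ^ (n + 2) / 16 ^ m / 2 ^ (n + m + 1) ^ 3 := by
  have hexp : n + 2 + 4 * m + (n + m + 1) ^ 3 + 1 ≤ (n + (m + 1) + 1) ^ 3 := by
    ring_nf; nlinarith
  calc 2 / 2 ^ (n + (m + 1) + 1) ^ 3
      ≤ 2 / 2 ^ (n + 2 + 4 * m + (n + m + 1) ^ 3 + 1) :=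
        div_le_div_of_nonneg_left (by norm_num) (by positivity)
          (pow_le_pow_right₀ (by norm_num) hexp)
    _ = (1 / 2 : ℝ) ^ (n + 2) / 16 ^ m / 2 ^ (n + m + 1) ^ 3 := by
        rw [pow_succ, pow_add, pow_add, pow_mul, one_div_pow]; norm_num; ring

theorem exists_forall_sub_notMem_coverSeq (n : ℕ) (t : ℕ → ℝ) : ∃ y, ∀ i, y - t i ∉ coverSeq n := by
  set α : ℝ := (1 / 2) ^ (n + 2)
  have hα : 0 < α := by positivity
  have hαα : α + α < (1 / 2) ^ n := by
    simp only [α, pow_succ, ← two_mul]; nlinarith [pow_pos (by norm_num : (0 : ℝ) < 1 / 2) n]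
  obtain ⟨y, hy⟩ := exists_forall_of_step (fun m => 2 / 2 ^ (n + m + 1) ^ 3) _
    (fun m => by positivity) (fun m a => exists_Icc_stage_scaled (by positivity) hα
      (hαα.trans_le (pow_le_one₀ (by norm_num) (by norm_num))) m
      (two_div_two_pow_succ_cube_le n m) (t m) t a) 0
  refine ⟨y, fun i => notMem_coverSeq (k₀ := n + i + 1) (δ := α / 16 ^ i / 8) (K := n + i + 2)
    ?_ (by positivity) fun k hk => ?_⟩
  · obtain ⟨hlo, hhi⟩ := (hy i).1
    exact ⟨hα.trans_le hlo, hhi.trans_lt hαα⟩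
  · obtain ⟨m, rfl⟩ : ∃ m, k = n + m + 1 := ⟨k - n - 1, by omega⟩
    exact (hy m).2 i (by omega)

theorem iUnion_image_add_coverSeq_ne_univ (n : ℕ) {T : Set ℝ} (hT : T.Countable) :
    ⋃ t ∈ T, (fun x => x + t) '' coverSeq n ≠ univ := by
  rcases T.eq_empty_or_nonempty with rfl | hne
  · simpa using empty_ne_univ
  obtain ⟨t, rfl⟩ := hT.exists_eq_range hne
  obtain ⟨y, hy⟩ := exists_forall_sub_notMem_coverSeq n t
  intro hcov
  have hmem : y ∈ ⋃ s ∈ range t, (fun x => x + s) '' coverSeq n := hcov ▸ mem_univ y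
  simp only [mem_iUnion, mem_range, exists_prop, mem_image] at hmem
  obtain ⟨_, ⟨i, rfl⟩, x, hx, rfl⟩ := hmem
  exact hy i (by simpa using hx)

/-- There exists an increasing sequence of Borel subsets of ℝ whose union is ℝ,
such that for no `n` can ℝ be covered by countably many translates of `B n`. -/
theorem borel_increasing_union_not_covered_by_translates :
    ∃ B : ℕ → Set ℝ,
      (∀ n, MeasurableSet (B n)) ∧
      Monotone B ∧
      (⋃ n, B n) = Set.univ ∧
      ∀ n, ¬ ∃ T : Set ℝ, T.Countable ∧ (⋃ t ∈ T, (fun x => x + t) '' B n) = Set.univ :=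
  ⟨coverSeq, measurableSet_coverSeq, monotone_coverSeq, iUnion_coverSeq,
    fun n ⟨_, hT, hcov⟩ => iUnion_image_add_coverSeq_ne_univ n hT hcov⟩
end

section
/- If X is a set of reals such that C_p(X) has the Pytkeev property, then X has strong measure zero. -/
/-- The Pytkeev property. -/
def PytkeevProperty (Y : Type*) [TopologicalSpace Y] : Prop :=
  ∀ (y : Y) (A : Set Y), y ∈ closure (A \ {y}) →
    ∃ As : ℕ → Set Y, (∀ n, (As n).Infinite ∧ As n ⊆ A) ∧
      ∀ U ∈ nhds y, ∃ n, As n ⊆ U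

/-- `Cp X`: continuous real-valued functions on `X` with the topology of pointwise
convergence. -/
def Cp (X : Set ℝ) : Type := {f : X → ℝ // Continuous f}

instance (X : Set ℝ) : TopologicalSpace (Cp X) :=
  instTopologicalSpaceSubtype

/-- `X ⊆ ℝ` has strong measure zero: for every sequence of positive reals `ε n` there is a
cover of `X` by intervals `I n` with length `< ε n`. -/
def StrongMeasureZeroSet (X : Set ℝ) : Prop :=
  ∀ ε : ℕ → ℝ, (∀ n, 0 < ε n) →
    ∃ a b : ℕ → ℝ, (∀ n, b n - a n < ε n) ∧ X ⊆ ⋃ n, Set.Icc (a n) (b n)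


/-!
Given radii `δ n > 0`, consider the continuous functions that vanish within `w / 2` of `k` points
of the grid `w ℤ` and are at least `1` farther than `w` from all of them. A tag `τ` fixes `k`,
a bound on the grid points and `k` indices `⟨τ, j⟩` with `w ≤ δ ⟨τ, j⟩`, so each tag carries only
finitely many such functions, while together they accumulate at `0` in `C_p(X)`. The Pytkeev
property yields infinite sets `A_m` of them, hence members `g_m` with pairwise distinct tags, such
that every neighbourhood `{f | |f x| < 1}` of `0` contains some `g_m`. So every `x ∈ X` lies in
one of the balls of radius `δ ⟨τ, j⟩` around the grid points of the `g_m`, and distinct tags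
index these balls injectively.
-/

open Metric Set Filter Topology Function

section Ramp

variable {α : Type*} [PseudoMetricSpace α]

noncomputable def ramp (C : Set α) (w : ℝ) : C(α, ℝ) :=
  ⟨fun y => max 0 (2 * infDist y C / w - 1), by fun_prop⟩

lemma ramp_apply (C : Set α) (w : ℝ) (y : α) :
    ramp C w y = max 0 (2 * infDist y C / w - 1) := rfl

lemma ramp_eq_zero_of_dist_le {C : Set α} {w : ℝ} (hw : 0 < w) {y c : α} (hc : c ∈ C)
    (hy : dist y c ≤ w / 2) : ramp C w y = 0 := by
  have hC : infDist y C ≤ w / 2 := (infDist_le_dist_of_mem hc).trans hy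
  rw [ramp_apply, max_eq_left]
  rw [sub_nonpos, div_le_one hw]
  linarith

lemma infDist_lt_of_abs_ramp_lt {C : Set α} {w : ℝ} (hw : 0 < w) {y : α}
    (hy : |ramp C w y| < 1) : infDist y C < w := by
  have h := (le_max_right _ _).trans_lt ((le_abs_self _).trans_lt hy)
  rw [sub_lt_iff_lt_add, one_add_one_eq_two, div_lt_iff₀ hw] at h
  linarith

end Ramp

lemma round_div_mem_Icc {x u w : ℝ} (hw : 0 < w) (hx : |x| ≤ u) :
    round (x / w) ∈ Icc (-(⌈u / w⌉ + 1)) (⌈u / w⌉ + 1) := by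
  have hxw : |x / w| ≤ ⌈u / w⌉ := by
    rw [abs_div, abs_of_pos hw]
    exact (div_le_div_of_nonneg_right hx hw.le).trans (Int.le_ceil _)
  have hround : |(round (x / w) : ℝ)| ≤ ⌈u / w⌉ + 1 := by
    have := abs_sub_round (x / w)
    have := abs_sub_abs_le_abs_sub (round (x / w) : ℝ) (x / w)
    rw [abs_sub_comm] at this
    linarith
  rw [mem_Icc, ← abs_le]
  exact_mod_cast hround

lemma dist_round_div_mul_le (x : ℝ) {w : ℝ} (hw : 0 < w) :
    dist x (round (x / w) * w) ≤ w / 2 := by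
  rw [Real.dist_eq, show x - round (x / w) * w = (x / w - round (x / w)) * w by field_simp,
    abs_mul, abs_of_pos hw]
  nlinarith [abs_sub_round (x / w)]

lemma exists_ball_cover_of_injective {α ι : Type*} [PseudoMetricSpace α] [Nonempty α]
    {X : Set α} {δ : ℕ → ℝ} {e : ι → ℕ} (he : Injective e) (c : ι → α)
    (hX : X ⊆ ⋃ i, ball (c i) (δ (e i))) : ∃ c' : ℕ → α, X ⊆ ⋃ n, ball (c' n) (δ n) := by
  refine ⟨extend e c fun _ => Classical.arbitrary α, hX.trans <| iUnion_subset fun i => ?_⟩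
  rw [← he.extend_apply c (fun _ => Classical.arbitrary α) i]
  exact subset_iUnion (fun n => ball (extend e c (fun _ => Classical.arbitrary α) n) (δ n)) (e i)

lemma StrongMeasureZeroSet.of_forall_exists_ball_cover {X : Set ℝ}
    (h : ∀ δ : ℕ → ℝ, (∀ n, 0 < δ n) → ∃ c : ℕ → ℝ, X ⊆ ⋃ n, ball (c n) (δ n)) :
    StrongMeasureZeroSet X := by
  intro ε hε
  obtain ⟨c, hc⟩ := h (fun n => ε n / 4) fun n => by linarith [hε n]
  refine ⟨fun n => c n - ε n / 4, fun n => c n + ε n / 4, fun n => by linarith [hε n],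
    hc.trans <| iUnion_mono fun n => ?_⟩
  rw [Real.ball_eq_Ioo]
  exact Ioo_subset_Icc_self

lemma PytkeevProperty.exists_seq_of_iUnion_finite {Y : Type*} [TopologicalSpace Y]
    (h : PytkeevProperty Y) {y : Y} {A : ℕ → Set Y} (hA : ∀ n, (A n).Finite)
    (hy : y ∈ closure ((⋃ n, A n) \ {y})) :
    ∃ (t : ℕ → ℕ) (g : ℕ → Y), StrictMono t ∧ (∀ m, g m ∈ A (t m)) ∧
      ∀ U ∈ 𝓝 y, ∃ m, g m ∈ U := by
  obtain ⟨B, hB, hBy⟩ := h y _ hy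
  have hfreq : ∀ m, ∃ᶠ n in atTop, (B m ∩ A n).Nonempty := by
    intro m
    refine frequently_atTop.2 fun N => ?_
    -- `B m` is infinite, so it is not covered by the finitely many `A n` with `n < N`.
    have hfin : (⋃ n ∈ Iio N, A n).Finite := (finite_Iio N).biUnion fun n _ => hA n
    obtain ⟨g, hgB, hgN⟩ := ((hB m).1.sdiff hfin).nonempty
    obtain ⟨n, hn⟩ := mem_iUnion.1 ((hB m).2 hgB)
    exact ⟨n, not_lt.1 fun hnN => hgN (mem_biUnion hnN hn), g, hgB, hn⟩
  obtain ⟨t, ht, hBt⟩ := extraction_forall_of_frequently hfreq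
  choose g hgB hgA using hBt
  exact ⟨t, g, ht, hgA, fun U hU => (hBy U hU).imp fun m hm => hm (hgB m)⟩

namespace Cp

variable {X : Set ℝ}

instance : Zero (Cp X) := ⟨⟨0, continuous_const⟩⟩

def ofContinuousMap (f : C(ℝ, ℝ)) : Cp X := ⟨fun x => f x, by fun_prop⟩

lemma continuous_eval (x : X) : Continuous fun f : Cp X => f.1 x :=
  (continuous_apply x).comp continuous_subtype_val

lemma exists_finset_of_mem_nhds {f₀ : Cp X} {U : Set (Cp X)} (hU : U ∈ 𝓝 f₀) :
    ∃ I : Finset X, ∀ f : Cp X, (∀ x ∈ I, f.1 x = f₀.1 x) → f ∈ U := by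
  have hnhds : 𝓝 f₀ = comap Subtype.val (𝓝 f₀.1) := nhds_induced _ _
  obtain ⟨V, hV, hVU⟩ := mem_comap.1 (hnhds ▸ hU)
  obtain ⟨I, W, hW, hIW⟩ := mem_pi'.1 (nhds_pi (a := f₀.1) ▸ hV)
  exact ⟨I, fun f hf => hVU <| hIW fun x hx => hf x hx ▸ mem_of_mem_nhds (hW x)⟩

end Cp

namespace StrongMeasureZeroSet

variable {δ : ℕ → ℝ}

/-- A tag `τ` codes a number `τ.unpair.1 + 1` of centers and a bound `τ.unpair.2` on the points
to be approximated; the `j`-th center of `τ` gets the budget `δ (Nat.pair τ j)`, so distinct tags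
draw on disjoint budgets. -/
def numCenters (τ : ℕ) : ℕ := τ.unpair.1 + 1

variable (δ) in
noncomputable def mesh (τ : ℕ) : ℝ :=
  (Finset.range (numCenters τ)).inf' (by simp [numCenters]) fun j => δ (Nat.pair τ j)

variable (δ) in
noncomputable def gridBound (τ : ℕ) : ℤ := ⌈(τ.unpair.2 : ℝ) / mesh δ τ⌉ + 1

variable (δ) in
abbrev GridSelection (τ : ℕ) : Type :=
  Fin (numCenters τ) → Icc (-gridBound δ τ) (gridBound δ τ)

variable (δ) in
noncomputable def center (τ : ℕ) (S : GridSelection δ τ) (j : Fin (numCenters τ)) : ℝ :=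
  (S j : ℤ) * mesh δ τ

variable (δ) in
noncomputable def gridRamp (τ : ℕ) (S : GridSelection δ τ) : C(ℝ, ℝ) :=
  ramp (range (center δ τ S)) (mesh δ τ)

lemma mesh_pos (hδ : ∀ n, 0 < δ n) (τ : ℕ) : 0 < mesh δ τ :=
  (Finset.lt_inf'_iff _).2 fun _ _ => hδ _

lemma mesh_le (τ : ℕ) (j : Fin (numCenters τ)) : mesh δ τ ≤ δ (Nat.pair τ j) :=
  Finset.inf'_le _ (Finset.mem_range.2 j.2)

lemma exists_dist_center_lt_of_abs_gridRamp_lt (hδ : ∀ n, 0 < δ n) {τ : ℕ}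
    (S : GridSelection δ τ) {y : ℝ} (hy : |gridRamp δ τ S y| < 1) :
    ∃ j, dist y (center δ τ S j) < δ (Nat.pair τ j) := by
  have hne : (range (center δ τ S)).Nonempty :=
    range_nonempty_iff_nonempty.2 ⟨⟨0, Nat.succ_pos _⟩⟩
  obtain ⟨_, ⟨j, rfl⟩, hj⟩ :=
    (infDist_lt_iff hne).1 (infDist_lt_of_abs_ramp_lt (mesh_pos hδ τ) hy)
  exact ⟨j, hj.trans_le (mesh_le τ j)⟩

lemma exists_gridRamp_eq_zero (hδ : ∀ n, 0 < δ n) (L : List ℝ) :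
    ∃ τ, ∃ S : GridSelection δ τ, ∀ x ∈ L, gridRamp δ τ S x = 0 := by
  obtain ⟨M, hM⟩ := (L.toFinset.image abs).exists_le
  obtain ⟨u, hu⟩ := exists_nat_ge M
  obtain ⟨τ, hτ⟩ : ∃ τ : ℕ, τ.unpair = (L.length, u) := ⟨_, Nat.unpair_pair _ _⟩
  set w := mesh δ τ
  have hw : 0 < w := mesh_pos hδ τ
  -- the `j`-th center is the grid point nearest to the `j`-th entry of `L`
  have hbound : ∀ j : Fin (numCenters τ), |L.getD j 0| ≤ τ.unpair.2 := by
    intro j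
    rw [hτ, List.getD_eq_getElem?_getD]
    cases hj : L[(j : ℕ)]? with
    | none => simp
    | some x =>
      have hx : x ∈ L.toFinset := List.mem_toFinset.2 (List.mem_of_getElem? hj)
      exact (hM _ (Finset.mem_image_of_mem _ hx)).trans hu
  refine ⟨τ, fun j => ⟨round (L.getD j 0 / w), round_div_mem_Icc hw (hbound j)⟩, fun x hx => ?_⟩
  obtain ⟨i, hi, rfl⟩ := List.getElem_of_mem hx
  have hiτ : i < numCenters τ := by rw [numCenters, hτ]; omega
  refine ramp_eq_zero_of_dist_le hw (mem_range_self ⟨i, hiτ⟩) ?_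
  show dist L[i] (round (L.getD i 0 / w) * w) ≤ w / 2
  rw [List.getD_eq_getElem _ _ hi]
  exact dist_round_div_mul_le _ hw

lemma exists_ball_cover_of_abs_gridRamp_lt (hδ : ∀ n, 0 < δ n) {X : Set ℝ} {ι : Type*}
    {t : ι → ℕ} (ht : Injective t) (S : ∀ i, GridSelection δ (t i))
    (hX : ∀ x ∈ X, ∃ i, |gridRamp δ (t i) (S i) x| < 1) :
    ∃ c : ℕ → ℝ, X ⊆ ⋃ n, ball (c n) (δ n) := by
  refine exists_ball_cover_of_injective (e := fun p : Σ i, Fin (numCenters (t i)) =>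
    Nat.pair (t p.1) p.2) ?_ (fun p => center δ (t p.1) (S p.1) p.2) fun x hx => ?_
  · rintro ⟨i, j⟩ ⟨i', j'⟩ h
    obtain ⟨hi, hj⟩ := Nat.pair_eq_pair.1 h
    obtain rfl := ht hi
    obtain rfl := Fin.ext hj
    rfl
  · obtain ⟨i, hi⟩ := hX x hx
    obtain ⟨j, hj⟩ := exists_dist_center_lt_of_abs_gridRamp_lt hδ (S i) hi
    exact mem_iUnion.2 ⟨⟨i, j⟩, hj⟩

lemma zero_mem_closure_gridRamps (hδ : ∀ n, 0 < δ n) (X : Set ℝ) :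
    (0 : Cp X) ∈ closure (⋃ τ, range fun S : GridSelection δ τ =>
      Cp.ofContinuousMap (gridRamp δ τ S)) := by
  refine mem_closure_iff_nhds.2 fun U hU => ?_
  obtain ⟨I, hI⟩ := Cp.exists_finset_of_mem_nhds hU
  obtain ⟨τ, S, hS⟩ := exists_gridRamp_eq_zero hδ (I.toList.map Subtype.val)
  exact ⟨_, hI _ fun x hx => hS x (List.mem_map_of_mem (Finset.mem_toList.2 hx)),
    mem_iUnion.2 ⟨τ, S, rfl⟩⟩

end StrongMeasureZeroSet

open StrongMeasureZeroSet

/-- If `C_p(X)` has the Pytkeev property, then `X` has strong measure zero. -/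
theorem strongMeasureZero_of_pytkeev (X : Set ℝ) (h : PytkeevProperty (Cp X)) :
    StrongMeasureZeroSet X := by
  refine of_forall_exists_ball_cover fun δ hδ => ?_
  set A : ℕ → Set (Cp X) := fun τ =>
    range fun S : GridSelection δ τ => Cp.ofContinuousMap (gridRamp δ τ S)
  -- the Pytkeev property needs `0 ∉ A`; a ramp that vanishes on `X` covers it by itself
  by_cases h0 : (0 : Cp X) ∈ ⋃ τ, A τ
  · obtain ⟨τ, S, hS⟩ := mem_iUnion.1 h0
    refine exists_ball_cover_of_abs_gridRamp_lt hδ (t := fun _ : Unit => τ)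
      (injective_of_subsingleton _) (fun _ => S) fun x hx => ⟨(), ?_⟩
    have hx0 : gridRamp δ τ S x = 0 := congr_arg (fun f : Cp X => f.1 ⟨x, hx⟩) hS
    simp [hx0]
  · have hcl : (0 : Cp X) ∈ closure ((⋃ τ, A τ) \ {0}) := by
      rw [sdiff_singleton_eq_self h0]
      exact zero_mem_closure_gridRamps hδ X
    obtain ⟨t, g, ht, hgA, hg⟩ := h.exists_seq_of_iUnion_finite (fun τ => finite_range _) hcl
    choose S hS using hgA
    refine exists_ball_cover_of_abs_gridRamp_lt hδ ht.injective S fun x hx => ?_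
    have hU : {f : Cp X | |f.1 ⟨x, hx⟩| < 1} ∈ 𝓝 0 :=
      (isOpen_lt (continuous_abs.comp (Cp.continuous_eval _)) continuous_const).mem_nhds
        (by simp [show (0 : Cp X).1 = 0 from rfl])
    obtain ⟨m, hm⟩ := hg _ hU
    refine ⟨m, ?_⟩
    rw [← hS m] at hm
    exact hm
end

section
/- If κ is a measurable cardinal, then there exists a monotonically normal topological space X with Δ(X) = κ such that no subspace of X is ω₁-resolvable. -/
open Cardinal

/-- A space is `κ`-resolvable if it contains `κ` pairwise disjoint dense subsets. -/
def Resolvable (X : Type*) [TopologicalSpace X] (κ : Cardinal) : Prop :=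
  ∃ D : Set (Set X), #D = κ ∧ (∀ d ∈ D, Dense d) ∧ D.PairwiseDisjoint id

/-- `Δ(X)`: the minimum cardinality of a nonempty open subset of `X`. -/
noncomputable def Delta (X : Type*) [TopologicalSpace X] : Cardinal :=
  sInf {c : Cardinal | ∃ U : Set X, IsOpen U ∧ U.Nonempty ∧ #U = c}

/-- `X` is maximally resolvable if it is `Δ(X)`-resolvable. -/
def MaximallyResolvable (X : Type*) [TopologicalSpace X] : Prop :=
  Resolvable X (Delta X)

/-- A (T₁) space is monotonically normal if there is an operator H assigning to each pair
(x, U) with x ∈ U open an open set H x U with x ∈ H x U ⊆ U, such that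
H x U ∩ H y V ≠ ∅ implies x ∈ V or y ∈ U. -/
def MonotonicallyNormal (X : Type*) [TopologicalSpace X] : Prop :=
  ∃ H : X → Set X → Set X,
    (∀ x U, IsOpen U → x ∈ U → IsOpen (H x U) ∧ x ∈ H x U ∧ H x U ⊆ U) ∧
    (∀ x U y V, IsOpen U → x ∈ U → IsOpen V → y ∈ V →
      (H x U ∩ H y V).Nonempty → x ∈ V ∨ y ∈ U)

/-- A space is crowded if it has no isolated points. -/
def Crowded (X : Type*) [TopologicalSpace X] : Prop :=
  ∀ x : X, Filter.NeBot (nhdsWithin x {x}ᶜ)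

/-- κ is a measurable cardinal: there is a κ-complete nonprincipal ultrafilter on a set
of cardinality κ. -/
def IsMeasurableCardinal (κ : Cardinal) : Prop :=
  ∃ (α : Type) (_ : #α = κ) (U : Ultrafilter α),
    (¬ ∃ a : α, (U : Filter α) = pure a) ∧
    ∀ s : Set (Set α), #s < κ → (∀ t ∈ s, t ∈ U) → ⋂₀ s ∈ U

/-!
Let `U` be a `κ`-complete nonprincipal ultrafilter on `κ`, and call a set `V` of finite sequences
from `κ` open when every `s ∈ V` has `U`-many one-point extensions `s ++ [a]` in `V`. Sending
`(s, V)` to the extensions of `s` whose whole path from `s` stays in `V` is a monotone normality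
operator, and all members of `U` have size `κ`, so `Δ = κ`.
If `κ > ℵ₀`, then `U` is countably complete and the closure of a set `D` is reached after `ω`
stages, each adding the sequences with `U`-many successors in the previous one. Pairwise disjoint
sets having a common point in their `n`-th stages are finitely many, so only countably many
pairwise disjoint sets accumulate at any point, and no subspace is `ω₁`-resolvable. If `κ = ℵ₀`
the space is countable, which gives the same conclusion.
-/

open Filter Set Topology

theorem Set.PairwiseDisjoint.countable_of_nonempty {X : Type*} [Countable X] {D : Set (Set X)}
    (hdisj : D.PairwiseDisjoint id) (hne : ∀ d ∈ D, d.Nonempty) : D.Countable := by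
  choose f hf using fun d : D => hne d d.2
  have hf_inj : Function.Injective f := fun d d' hdd' =>
    Subtype.ext (hdisj.elim d.2 d'.2 (not_disjoint_iff.2 ⟨f d, hf d, hdd' ▸ hf d'⟩))
  exact countable_coe_iff.1 hf_inj.countable

theorem not_resolvable_aleph_one {X : Type*} [TopologicalSpace X]
    (h : ∀ (x : X) (D : Set (Set X)), D.PairwiseDisjoint id → (∀ d ∈ D, x ∈ closure d) →
      D.Countable)
    (S : Set X) : ¬ Resolvable S (aleph 1) := by
  rintro ⟨D, hcard, hdense, hdisj⟩
  suffices hD : D.Countable from (hcard ▸ hD.le_aleph0).not_gt aleph0_lt_aleph_one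
  rcases isEmpty_or_nonempty S with hS | ⟨⟨x⟩⟩
  · exact subsingleton_of_subsingleton.countable
  have hinj : InjOn (image ((↑) : S → X)) D := (image_injective.2 Subtype.val_injective).injOn
  refine countable_of_injective_of_countable_image hinj (h (x : X) _ ?_ ?_)
  · rintro _ ⟨d, hd, rfl⟩ _ ⟨d', hd', rfl⟩ hne
    exact (disjoint_image_iff Subtype.val_injective).2 (hdisj hd hd' (ne_of_apply_ne _ hne))
  · rintro _ ⟨d, hd, rfl⟩
    exact closure_subtype.1 (hdense d hd x)

theorem Filter.le_mk_of_mem {α : Type*} {l : Filter α} [NeBot l] [CardinalInterFilter l #α]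
    (hl : l ≤ cofinite) {B : Set α} (hB : B ∈ l) : #α ≤ #B := by
  by_contra! hB_small
  have hBc : ⋂ b ∈ B, ({b}ᶜ : Set α) ∈ l :=
    (cardinal_bInter_mem hB_small).2 fun b _ => le_cofinite_iff_compl_singleton_mem.1 hl b
  have hBc_eq : ⋂ b ∈ B, ({b}ᶜ : Set α) = Bᶜ := by
    rw [← compl_iUnion₂, biUnion_of_singleton]
  rw [hBc_eq] at hBc
  simpa using inter_mem hB hBc

theorem Ultrafilter.exists_mem_of_iUnion_mem {α ι : Type*} [Countable ι] (U : Ultrafilter α)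
    [CountableInterFilter (U : Filter α)] {s : ι → Set α} (h : ⋃ i, s i ∈ U) :
    ∃ i, s i ∈ U := by
  by_contra! hs
  have hc : (⋃ i, s i)ᶜ ∈ U := by
    rw [compl_iUnion]
    exact countable_iInter_mem.2 fun i => U.compl_mem_iff_notMem.2 (hs i)
  exact U.compl_mem_iff_notMem.1 hc h

section TreeTopology

variable {α : Type*}

@[reducible]
def treeTopology (F : Filter α) : TopologicalSpace (List α) where
  IsOpen V := ∀ s ∈ V, {a | s ++ [a] ∈ V} ∈ F
  isOpen_univ _ _ := univ_mem' fun _ => trivial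
  isOpen_inter _ _ hV hW s hs := inter_mem (hV s hs.1) (hW s hs.2)
  isOpen_sUnion _ h := fun _ ⟨V, hV, hs⟩ => mem_of_superset (h V hV _ hs) fun _ ha => ⟨V, hV, ha⟩

theorem append_singleton_injective (s : List α) : Function.Injective fun a : α => s ++ [a] :=
  fun _ _ h => List.singleton_injective (List.append_right_injective s h)

def pathsWithin (s : List α) (V : Set (List α)) : Set (List α) :=
  {w | s <+: w ∧ ∀ t, s <+: t → t <+: w → t ∈ V}

theorem self_mem_pathsWithin {s : List α} {V : Set (List α)} (hs : s ∈ V) :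
    s ∈ pathsWithin s V :=
  ⟨List.prefix_refl s, fun _ hst hts =>
    (hts.eq_of_length (le_antisymm hts.length_le hst.length_le)) ▸ hs⟩

theorem pathsWithin_subset {s : List α} {V : Set (List α)} : pathsWithin s V ⊆ V :=
  fun w hw => hw.2 w hw.1 (List.prefix_refl w)

theorem isOpen_pathsWithin {F : Filter α} {s : List α} {V : Set (List α)}
    (hV : IsOpen[treeTopology F] V) : IsOpen[treeTopology F] (pathsWithin s V) := by
  intro w hw
  refine mem_of_superset (hV w (pathsWithin_subset hw)) fun a ha => ?_
  refine ⟨hw.1.trans (List.prefix_append w [a]), fun t hst htw => ?_⟩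
  rcases List.prefix_concat_iff.1 htw with rfl | htw
  exacts [ha, hw.2 t hst htw]

theorem mem_or_mem_of_mem_pathsWithin {s t w : List α} {V W : Set (List α)}
    (hs : w ∈ pathsWithin s V) (ht : w ∈ pathsWithin t W) : s ∈ W ∨ t ∈ V := by
  rcases List.prefix_or_prefix_of_prefix hs.1 ht.1 with hst | hts
  · exact Or.inr (hs.2 t hst ht.1)
  · exact Or.inl (ht.2 s hts hs.1)

theorem monotonicallyNormal_treeTopology (F : Filter α) :
    @MonotonicallyNormal _ (treeTopology F) :=
  ⟨pathsWithin,
    fun _ _ hV hs => ⟨isOpen_pathsWithin hV, self_mem_pathsWithin hs, pathsWithin_subset⟩,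
    fun _ _ _ _ _ _ _ _ ⟨_, hw₁, hw₂⟩ => mem_or_mem_of_mem_pathsWithin hw₁ hw₂⟩

theorem t1Space_treeTopology {F : Filter α} (hF : F ≤ cofinite) :
    @T1Space _ (treeTopology F) := by
  let := treeTopology F
  refine ⟨fun x => isOpen_compl_iff.1 fun s _ => hF ?_⟩
  exact ((finite_singleton x).preimage (append_singleton_injective s).injOn).compl_mem_cofinite

theorem delta_treeTopology [Infinite α] {F : Filter α} (hF : ∀ B ∈ F, #α ≤ #B) :
    @Delta _ (treeTopology F) = #α := by
  let := treeTopology F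
  have huniv : #(univ : Set (List α)) = #α := by rw [mk_univ, mk_list_eq_mk]
  refine le_antisymm (csInf_le' ⟨univ, isOpen_univ, univ_nonempty, huniv⟩) ?_
  refine le_csInf ⟨_, univ, isOpen_univ, univ_nonempty, huniv⟩ ?_
  rintro _ ⟨V, hV, ⟨s, hs⟩, rfl⟩
  exact (hF _ (hV s hs)).trans (mk_preimage_of_injective _ V (append_singleton_injective s))

def closureStage (F : Filter α) (D : Set (List α)) : ℕ → Set (List α)
  | 0 => D
  | n + 1 => closureStage F D n ∪ {s | {a | s ++ [a] ∈ closureStage F D n} ∈ F}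

theorem closure_subset_iUnion_closureStage (U : Ultrafilter α)
    [CountableInterFilter (U : Filter α)] (D : Set (List α)) :
    closure[treeTopology U] D ⊆ ⋃ n, closureStage U D n := by
  let := treeTopology (U : Filter α)
  refine closure_minimal (subset_iUnion (closureStage (U : Filter α) D) 0) (isOpen_compl_iff.1 ?_)
  intro s hs
  refine U.compl_mem_iff_notMem.2 fun hsucc => hs ?_
  have hsucc' : (s ++ [·]) ⁻¹' ⋃ n, closureStage (U : Filter α) D n ∈ U := hsucc
  rw [preimage_iUnion] at hsucc'
  obtain ⟨n, hn⟩ := U.exists_mem_of_iUnion_mem hsucc'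
  exact mem_iUnion.2 ⟨n + 1, Or.inr hn⟩

theorem finite_of_mem_closureStage {F : Filter α} [NeBot F] [CountableInterFilter F] (n : ℕ)
    (t : List α) {J : Set (Set (List α))} (hdisj : J.PairwiseDisjoint id)
    (ht : ∀ d ∈ J, t ∈ closureStage F d n) : J.Finite := by
  induction n generalizing t J with
  | zero =>
    exact Set.Subsingleton.finite fun d hd d' hd' =>
      hdisj.elim hd hd' (not_disjoint_iff.2 ⟨t, ht d hd, ht d' hd'⟩)
  | succ n ih =>
    have hcover : J ⊆ {d ∈ J | t ∈ closureStage F d n} ∪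
        {d ∈ J | {a | t ++ [a] ∈ closureStage F d n} ∈ F} :=
      fun d hd => (ht d hd).imp (⟨hd, ·⟩) (⟨hd, ·⟩)
    refine Finite.subset (Finite.union ?_ ?_) hcover
    · exact ih t (hdisj.subset (sep_subset _ _)) fun d hd => hd.2
    -- otherwise countably many of these `d` share a successor `t ++ [a]` in their `n`-th stage
    · by_contra hinf
      let f := (Set.not_finite.1 hinf).natEmbedding
      obtain ⟨a, ha⟩ := Filter.nonempty_of_mem (countable_iInter_mem.2 fun m => (f m).2.2)
      refine (infinite_range_of_injective (Subtype.val_injective.comp f.injective))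
        (ih (t ++ [a]) (hdisj.subset ?_) ?_)
      · rintro _ ⟨m, rfl⟩
        exact (f m).2.1
      · rintro _ ⟨m, rfl⟩
        exact mem_iInter.1 ha m

theorem countable_of_pairwiseDisjoint_of_mem_closure (U : Ultrafilter α)
    [CountableInterFilter (U : Filter α)] {x : List α} {D : Set (Set (List α))}
    (hdisj : D.PairwiseDisjoint id) (hx : ∀ d ∈ D, x ∈ closure[treeTopology U] d) :
    D.Countable := by
  choose! r hr using fun d hd => mem_iUnion.1 (closure_subset_iUnion_closureStage U d (hx d hd))
  have hcover : D ⊆ ⋃ n, {d ∈ D | r d = n} := fun d hd => mem_iUnion.2 ⟨_, hd, rfl⟩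
  refine (countable_iUnion fun n => ?_).mono hcover
  exact (finite_of_mem_closureStage n x (hdisj.subset (sep_subset _ _))
    fun d hd => hd.2 ▸ hr d hd.1).countable

end TreeTopology

/-- If κ is measurable then there is a monotonically normal space X with Δ(X) = κ such
that no subspace of X is ω₁-resolvable. -/
theorem exists_monotonicallyNormal_no_subspace_omega1_resolvable
    (κ : Cardinal) (hκ : IsMeasurableCardinal κ) :
    ∃ (X : Type) (_ : TopologicalSpace X), T1Space X ∧ MonotonicallyNormal X ∧
      Delta X = κ ∧ ∀ S : Set X, ¬ Resolvable S (Cardinal.aleph 1) := by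
  obtain ⟨α, rfl, U, hnp, hcomp⟩ := hκ
  have : CardinalInterFilter (U : Filter α) #α := ⟨hcomp⟩
  have hU : (U : Filter α) ≤ cofinite :=
    U.le_cofinite_or_eq_pure.resolve_right fun ⟨a, ha⟩ => hnp ⟨a, ha ▸ rfl⟩
  have : Infinite α :=
    not_finite_iff_infinite.1 fun _ => U.neBot.ne (le_bot_iff.1 (hU.trans_eq cofinite_eq_bot))
  let := treeTopology (U : Filter α)
  refine ⟨List α, _, t1Space_treeTopology hU, monotonicallyNormal_treeTopology _,
    delta_treeTopology fun B hB => le_mk_of_mem hU hB, not_resolvable_aleph_one ?_⟩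
  intro x D hdisj hx
  rcases le_or_gt #α ℵ₀ with hα | hα
  · have := mk_le_aleph0_iff.1 hα
    exact hdisj.countable_of_nonempty fun d hd => closure_nonempty_iff.1 ⟨x, hx d hd⟩
  · have := CardinalInterFilter.toCountableInterFilter (U : Filter α) hα
    exact countable_of_pairwiseDisjoint_of_mem_closure U hdisj hx
end

section
/- A linear order ℚ(κ) — a linear order of cardinality κ such that for any two subsets A, B each of size < κ with A < B pointwise there exists an element strictly between A and B — exists only if κ^{<κ} = κ. -/
/-!
For infinite `κ` and `μ < κ` we embed functions `μ → κ`, ordered lexicographically, into the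
order `α`, so that `κ ^ μ ≤ #α = κ`. Every cut with fewer than `κ` points on each side contains a
strictly increasing `κ`-sequence, built by transfinite recursion. Along a branch `g`, the cut
reached before level `j` is narrowed at level `j` to lie between the `g j`-th and the
`succ (g j)`-th points of its sequence; fewer than `κ` levels keep every cut small, and a point of
the final cut represents `g`. Branches that first differ at level `j` are separated there.
If `κ > 1`, filling the cut `({a}, ∅)` shows that `α` has no maximum, so `κ` is infinite.
-/

open Cardinal Set Order

universe u

/-- Hausdorff's `η`-property; the paper's `ℚ(κ)` is an `η`-set at `κ` of cardinality `κ`. -/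
def IsEtaSet (κ : Cardinal.{u}) (α : Type u) [LinearOrder α] : Prop :=
  ∀ A B : Set α, #A < κ → #B < κ → (∀ a ∈ A, ∀ b ∈ B, a < b) →
    ∃ x : α, (∀ a ∈ A, a < x) ∧ (∀ b ∈ B, x < b)

theorem Cardinal.powerlt_self_of_le_one {κ : Cardinal} (hκ : κ ≤ 1) : κ ^< κ = κ := by
  rcases hκ.lt_or_eq with hκ | rfl
  · rw [Cardinal.lt_one_iff.1 hκ, powerlt_zero]
  · refine le_antisymm (powerlt_le.2 fun _ _ => one_power.le) ?_
    simpa using le_powerlt 1 zero_lt_one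

variable {α : Type u} [LinearOrder α] {κ : Cardinal.{u}}

def IsSmallCut (κ : Cardinal.{u}) (p : Set α × Set α) : Prop :=
  #p.1 < κ ∧ #p.2 < κ ∧ ∀ a ∈ p.1, ∀ b ∈ p.2, a < b

namespace IsEtaSet

theorem nonempty (h : IsEtaSet κ α) (hκ : 0 < κ) : Nonempty α :=
  ⟨(h ∅ ∅ (by simpa) (by simpa) (by simp)).choose⟩

theorem noMaxOrder (h : IsEtaSet κ α) (hκ : 1 < κ) : NoMaxOrder α where
  exists_gt a :=
    have ⟨x, hx, _⟩ := h {a} ∅ (by simpa) (by simpa using zero_lt_one.trans hκ) (by simp)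
    ⟨x, hx a rfl⟩

theorem aleph0_le_mk (h : IsEtaSet κ α) (hκ : 1 < κ) : ℵ₀ ≤ #α :=
  have := h.nonempty (zero_lt_one.trans hκ)
  have := h.noMaxOrder hκ
  Cardinal.aleph0_le_mk α

end IsEtaSet

section Cuts

variable [Nonempty α]

noncomputable def cutPoint (p : Set α × Set α) : α :=
  Classical.epsilon fun x => (∀ a ∈ p.1, a < x) ∧ ∀ b ∈ p.2, x < b

theorem IsEtaSet.cutPoint_spec (h : IsEtaSet κ α) {p : Set α × Set α} (hp : IsSmallCut κ p) :
    (∀ a ∈ p.1, a < cutPoint p) ∧ ∀ b ∈ p.2, cutPoint p < b :=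
  Classical.epsilon_spec (h p.1 p.2 hp.1 hp.2.1 hp.2.2)

section Chain

variable {γ : Type u} [LinearOrder γ] [WellFoundedLT γ]

noncomputable def cutChain (p : Set α × Set α) : γ → α :=
  WellFoundedLT.fix fun j ih => cutPoint (p.1 ∪ range fun i : Iio j => ih i i.2, p.2)

theorem cutChain_eq (p : Set α × Set α) (j : γ) :
    cutChain p j = cutPoint (p.1 ∪ range fun i : Iio j => cutChain p i.1, p.2) := by
  unfold cutChain
  exact WellFoundedLT.fix_eq _ j

variable {p : Set α × Set α}

theorem IsEtaSet.isSmallCut_cutChain (h : IsEtaSet κ α) (hκ : ℵ₀ ≤ κ)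
    (hγ : ∀ j : γ, #(Iio j) < κ) (hp : IsSmallCut κ p) (j : γ) :
    IsSmallCut κ (p.1 ∪ range fun i : Iio j => cutChain p i.1, p.2) := by
  induction j using WellFoundedLT.induction with
  | ind j ih =>
    refine ⟨(mk_union_le _ _).trans_lt (add_lt_of_lt hκ hp.1 (mk_range_le.trans_lt (hγ j))),
      hp.2.1, ?_⟩
    rintro a (ha | ⟨i, rfl⟩) b hb
    · exact hp.2.2 a ha b hb
    · dsimp only
      rw [cutChain_eq]
      exact (h.cutPoint_spec (ih i i.2)).2 b hb

theorem IsEtaSet.lt_cutChain (h : IsEtaSet κ α) (hκ : ℵ₀ ≤ κ) (hγ : ∀ j : γ, #(Iio j) < κ)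
    (hp : IsSmallCut κ p) (j : γ) {a : α} (ha : a ∈ p.1) : a < cutChain p j := by
  rw [cutChain_eq]
  exact (h.cutPoint_spec (h.isSmallCut_cutChain hκ hγ hp j)).1 a (Or.inl ha)

theorem IsEtaSet.cutChain_lt (h : IsEtaSet κ α) (hκ : ℵ₀ ≤ κ) (hγ : ∀ j : γ, #(Iio j) < κ)
    (hp : IsSmallCut κ p) (j : γ) {b : α} (hb : b ∈ p.2) : cutChain p j < b := by
  rw [cutChain_eq]
  exact (h.cutPoint_spec (h.isSmallCut_cutChain hκ hγ hp j)).2 b hb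

theorem IsEtaSet.strictMono_cutChain (h : IsEtaSet κ α) (hκ : ℵ₀ ≤ κ)
    (hγ : ∀ j : γ, #(Iio j) < κ) (hp : IsSmallCut κ p) : StrictMono (cutChain p : γ → α) := by
  intro i j hij
  conv_rhs => rw [cutChain_eq]
  exact (h.cutPoint_spec (h.isSmallCut_cutChain hκ hγ hp j)).1 _ (Or.inr ⟨⟨i, hij⟩, rfl⟩)

end Chain

section Branch

variable {β γ : Type u} [LinearOrder β] [WellFoundedLT β] [LinearOrder γ] [WellFoundedLT γ]
  [SuccOrder γ]

noncomputable def branchCut (g : β → γ) : WithTop β → Set α × Set α :=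
  WellFoundedLT.fix fun i ih =>
    (range fun j : {j : β // (j : WithTop β) < i} => cutChain (ih j j.2) (g j),
     range fun j : {j : β // (j : WithTop β) < i} => cutChain (ih j j.2) (succ (g j)))

theorem branchCut_eq (g : β → γ) (i : WithTop β) :
    branchCut (α := α) g i =
      (range fun j : {j : β // (j : WithTop β) < i} => cutChain (branchCut g j) (g j),
       range fun j : {j : β // (j : WithTop β) < i} => cutChain (branchCut g j) (succ (g j))) := by
  unfold branchCut
  exact WellFoundedLT.fix_eq _ i

theorem IsEtaSet.isSmallCut_branchCut (h : IsEtaSet κ α) (hκ : ℵ₀ ≤ κ)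
    (hγ : ∀ j : γ, #(Iio j) < κ) [NoMaxOrder γ] (hβ : #β < κ) (g : β → γ) (i : WithTop β) :
    IsSmallCut κ (branchCut (α := α) g i) := by
  induction i using WellFoundedLT.induction with
  | ind i ih =>
    rw [branchCut_eq]
    refine ⟨mk_range_le.trans_lt ((mk_subtype_le _).trans_lt hβ),
      mk_range_le.trans_lt ((mk_subtype_le _).trans_lt hβ), ?_⟩
    rintro _ ⟨⟨j, hj⟩, rfl⟩ _ ⟨⟨k, hk⟩, rfl⟩
    dsimp only
    rcases lt_trichotomy j k with hjk | rfl | hkj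
    · refine h.lt_cutChain hκ hγ (ih k hk) _ ?_
      rw [branchCut_eq]
      exact ⟨⟨j, WithTop.coe_lt_coe.2 hjk⟩, rfl⟩
    · exact h.strictMono_cutChain hκ hγ (ih j hj) (lt_succ (g j))
    · refine h.cutChain_lt hκ hγ (ih j hj) _ ?_
      rw [branchCut_eq]
      exact ⟨⟨k, WithTop.coe_lt_coe.2 hkj⟩, rfl⟩

theorem branchCut_congr {g g' : β → γ} (i : WithTop β)
    (hg : ∀ j : β, (j : WithTop β) < i → g j = g' j) :
    branchCut (α := α) g i = branchCut g' i := by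
  induction i using WellFoundedLT.induction with
  | ind i ih =>
    have hcut (j : {j : β // (j : WithTop β) < i}) : branchCut (α := α) g j = branchCut g' j :=
      ih j j.2 fun k hk => hg k (hk.trans j.2)
    rw [branchCut_eq, branchCut_eq]
    simp only [hcut, fun j : {j : β // (j : WithTop β) < i} => hg j j.2]

noncomputable def branchPoint (g : β → γ) : α :=
  cutPoint (branchCut g ⊤)

theorem IsEtaSet.strictMono_branchPoint (h : IsEtaSet κ α) (hκ : ℵ₀ ≤ κ)
    (hγ : ∀ j : γ, #(Iio j) < κ) [NoMaxOrder γ] (hβ : #β < κ) :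
    StrictMono fun g : Lex (β → γ) => (branchPoint (ofLex g) : α) := by
  rintro g g' ⟨j, hagree, hlt⟩
  have hcut : branchCut (α := α) (ofLex g) j = branchCut (ofLex g') j :=
    branchCut_congr _ fun k hk => hagree k (WithTop.coe_lt_coe.1 hk)
  set p := branchCut (α := α) (ofLex g) j
  have hp : IsSmallCut κ p := h.isSmallCut_branchCut hκ hγ hβ _ _
  calc branchPoint (ofLex g)
      < cutChain p (succ (g j)) := by
        refine (h.cutPoint_spec (h.isSmallCut_branchCut hκ hγ hβ _ ⊤)).2 _ ?_
        rw [branchCut_eq]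
        exact ⟨⟨j, WithTop.coe_lt_top j⟩, rfl⟩
    _ ≤ cutChain p (g' j) := (h.strictMono_cutChain hκ hγ hp).monotone (succ_le_of_lt hlt)
    _ < branchPoint (ofLex g') := by
        refine (h.cutPoint_spec (h.isSmallCut_branchCut hκ hγ hβ _ ⊤)).1 _ ?_
        rw [branchCut_eq]
        exact ⟨⟨j, WithTop.coe_lt_top j⟩, by rw [hcut]; rfl⟩

end Branch

end Cuts

theorem IsEtaSet.power_le_mk (h : IsEtaSet κ α) (hκ : ℵ₀ ≤ κ) {μ : Cardinal.{u}} (hμ : μ < κ) :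
    κ ^ μ ≤ #α := by
  have := h.nonempty (aleph0_pos.trans_le hκ)
  have := Cardinal.noMaxOrder hκ
  have hβ : #μ.ord.ToType < κ := by rwa [mk_toType, card_ord]
  have hγ (j : κ.ord.ToType) : #(Iio j) < κ := by simpa using mk_Iio_lt j (by simp)
  calc κ ^ μ = #(μ.ord.ToType → κ.ord.ToType) := by
        rw [← power_def, mk_ord_toType, mk_toType, card_ord]
    _ ≤ #α := mk_le_of_injective (h.strictMono_branchPoint hκ hγ hβ).injective

/-- If there is a linear order of cardinality κ such that for any two subsets A, B of size
< κ with A pointwise below B there is an element strictly between them, then κ^{<κ} = κ. -/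
theorem powerlt_self_of_exists_Q_kappa (κ : Cardinal)
    (h : ∃ (α : Type) (_ : LinearOrder α), #α = κ ∧
      ∀ A B : Set α, #A < κ → #B < κ → (∀ a ∈ A, ∀ b ∈ B, a < b) →
        ∃ x : α, (∀ a ∈ A, a < x) ∧ (∀ b ∈ B, x < b)) :
    κ ^< κ = κ := by
  obtain ⟨α, _, rfl, h⟩ := h
  rcases le_or_gt #α 1 with hα | hα
  · exact powerlt_self_of_le_one hα
  have h : IsEtaSet #α α := h
  refine le_antisymm (powerlt_le.2 fun μ hμ => h.power_le_mk (h.aleph0_le_mk hα) hμ) ?_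
  simpa using le_powerlt #α hα
end
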